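/- In the semi-discrete setting with X convex, let ψ⁰, ψ¹ ∈ ℝ^N, t ∈ [0,1], and ψ^t = (1−t)ψ⁰ + tψ¹. Then for every index i, the Minkowski combination of Laguerre cells satisfies (1−t)·V_i(ψ⁰) + t·V_i(ψ¹) ⊆ V_i(ψ^t). -/

import Mathlib

open MeasureTheory
open scoped RealInnerProductSpace ENNReal Pointwise

/-! A Laguerre cell is the convex set `X` cut by finitely many half-spaces whose normals
`y j - y i` do not depend on `ψ` and whose offsets `ψ j - ψ i` are linear in `ψ`. A Minkowski
combination of intersections lies in the intersection of the Minkowski combinations, so it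
suffices to treat `X` (convexity) and a single half-space (linearity of `x ↦ ⟪y j - y i, x⟫`). -/

def laguerreCell {d N : ℕ} (X : Set (EuclideanSpace ℝ (Fin d)))
    (y : Fin N → EuclideanSpace ℝ (Fin d)) (ψ : Fin N → ℝ) (i : Fin N) :
    Set (EuclideanSpace ℝ (Fin d)) :=
  {x ∈ X | ∀ j, ψ i + ⟪y j - y i, x⟫ ≤ ψ j}

namespace Set

variable {α β ι : Type*} [SMul α β] [Add β]

theorem smul_add_smul_inter_subset (a b : α) (s₁ s₂ t₁ t₂ : Set β) :
    a • (s₁ ∩ s₂) + b • (t₁ ∩ t₂) ⊆ (a • s₁ + b • t₁) ∩ (a • s₂ + b • t₂) :=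
  subset_inter
    (add_subset_add (smul_set_mono inter_subset_left) (smul_set_mono inter_subset_left))
    (add_subset_add (smul_set_mono inter_subset_right) (smul_set_mono inter_subset_right))

theorem smul_add_smul_iInter_subset (a b : α) (s t : ι → Set β) :
    a • (⋂ i, s i) + b • (⋂ i, t i) ⊆ ⋂ i, (a • s i + b • t i) :=
  subset_iInter fun i =>
    add_subset_add (smul_set_mono (iInter_subset s i)) (smul_set_mono (iInter_subset t i))

end Set

theorem LinearMap.smul_add_smul_setOf_le_subset {𝕜 E : Type*} [CommRing 𝕜] [LinearOrder 𝕜]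
    [IsStrictOrderedRing 𝕜] [AddCommGroup E] [Module 𝕜 E] (f : E →ₗ[𝕜] 𝕜) {a b : 𝕜}
    (ha : 0 ≤ a) (hb : 0 ≤ b) (c₀ c₁ : 𝕜) :
    a • {x | f x ≤ c₀} + b • {x | f x ≤ c₁} ⊆ {x | f x ≤ a * c₀ + b * c₁} := by
  rintro _ ⟨_, ⟨x₀, hx₀, rfl⟩, _, ⟨x₁, hx₁, rfl⟩, rfl⟩
  simp only [Set.mem_ofPred_eq, map_add, map_smul, smul_eq_mul]
  exact add_le_add (mul_le_mul_of_nonneg_left hx₀ ha) (mul_le_mul_of_nonneg_left hx₁ hb)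

theorem laguerreCell_eq_inter_iInter {d N : ℕ} (X : Set (EuclideanSpace ℝ (Fin d)))
    (y : Fin N → EuclideanSpace ℝ (Fin d)) (ψ : Fin N → ℝ) (i : Fin N) :
    laguerreCell X y ψ i = X ∩ ⋂ j, {x | innerₛₗ ℝ (y j - y i) x ≤ ψ j - ψ i} := by
  ext x
  simp only [laguerreCell, Set.mem_inter_iff, Set.mem_iInter, Set.mem_ofPred_eq,
    innerₛₗ_apply_apply, le_sub_iff_add_le']

theorem laguerre_cell_minkowski_general
    (d N : ℕ) (X : Set (EuclideanSpace ℝ (Fin d)))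
    (hXconv : Convex ℝ X)
    (y : Fin N → EuclideanSpace ℝ (Fin d))
    (ψ₀ ψ₁ : Fin N → ℝ) (t : ℝ) (ht : t ∈ Set.Icc (0 : ℝ) 1) (i : Fin N) :
    (1 - t) • laguerreCell X y ψ₀ i + t • laguerreCell X y ψ₁ i ⊆
      laguerreCell X y (fun j => (1 - t) * ψ₀ j + t * ψ₁ j) i := by
  obtain ⟨ht₀, ht₁⟩ := ht
  have h1t : 0 ≤ 1 - t := sub_nonneg.2 ht₁
  simp only [laguerreCell_eq_inter_iInter]
  refine (Set.smul_add_smul_inter_subset (1 - t) t _ _ _ _).trans (Set.inter_subset_inter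
    (hXconv.set_combo_subset h1t ht₀ (sub_add_cancel 1 t)) ?_)
  refine (Set.smul_add_smul_iInter_subset (1 - t) t _ _).trans (Set.iInter_mono fun j => ?_)
  refine ((innerₛₗ ℝ (y j - y i)).smul_add_smul_setOf_le_subset h1t ht₀ _ _).trans_eq ?_
  congr! 3
  ring

/-- For `ψ^t = (1−t)ψ⁰ + tψ¹` and `X` convex, the Minkowski combination of Laguerre cells
satisfies `(1−t)·V_i(ψ⁰) + t·V_i(ψ¹) ⊆ V_i(ψ^t)`. -/
theorem laguerre_cell_minkowski
    (d N : ℕ) (X Y : Set (EuclideanSpace ℝ (Fin d)))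
    (hXc : IsCompact X) (hXconv : Convex ℝ X)
    (hYc : IsCompact Y) (hYconv : Convex ℝ Y)
    (y : Fin N → EuclideanSpace ℝ (Fin d))
    (hy : Function.Injective y) (hyY : ∀ i, y i ∈ Y)
    (ψ₀ ψ₁ : Fin N → ℝ) (t : ℝ) (ht : t ∈ Set.Icc (0 : ℝ) 1) (i : Fin N) :
    (1 - t) • laguerreCell X y ψ₀ i + t • laguerreCell X y ψ₁ i ⊆
      laguerreCell X y (fun j => (1 - t) * ψ₀ j + t * ψ₁ j) i :=
  laguerre_cell_minkowski_general d N X hXconv y ψ₀ ψ₁ t ht i
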